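/- Let T, T' be compact operators on a Hilbert space and suppose n(λ, T) ≤ C·λ^{-p} for all λ > 0 with constants C, p > 0, and n(λ, T') = o(λ^{-p}) as λ → 0. Then limsup_{λ→0} λ^p · n(λ, T + T') ≤ C and if in addition n(λ, T) ~ C·λ^{-p} as λ→0, then n(λ, T + T') ~ C·λ^{-p}. -/

import Mathlib

open Filter
open scoped Topology ENNReal

/-- The `k`-th singular value (approximation number) of a continuous linear map. -/
noncomputable def sNum {E F : Type*} [NormedAddCommGroup E] [NormedSpace ℂ E]
    [NormedAddCommGroup F] [NormedSpace ℂ F] (T : E →L[ℂ] F) (k : ℕ) : ℝ :=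
  sInf {c : ℝ | ∃ G : E →L[ℂ] F,
    Module.rank ℂ (LinearMap.range (G : E →ₗ[ℂ] F)) ≤ (k : Cardinal) ∧ ‖T - G‖ ≤ c}

/-- The (extended-real valued) singular value counting function `n(λ, T)`:
the number of singular values of `T` strictly greater than `λ`. -/
noncomputable def nCountE {E F : Type*} [NormedAddCommGroup E] [NormedSpace ℂ E]
    [NormedAddCommGroup F] [NormedSpace ℂ F] (T : E →L[ℂ] F) (lam : ℝ) : ℝ≥0∞ :=
  ∑' _ : {k : ℕ // lam < sNum T k}, 1

/-!
The Weyl-type inequality `s_{j+k}(T + T') ≤ s_j(T) + s_k(T')` for approximation numbers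
gives `n(a + b, T + T') ≤ n(a, T) + n(b, T')`. Splitting `λ = cλ + (1 - c)λ` with `0 < c < 1`
yields `λ^p n(λ, T + T') ≤ c^{-p} (cλ)^p n(cλ, T) + λ^p n((1 - c)λ, T')`, where the last term
tends to `0`. Hence `limsup λ^p n(λ, T + T') ≤ c^{-p} limsup λ^p n(λ, T)`, and letting `c → 1`
removes the factor `c^{-p}`. Applied to `T = (T + T') + (-T')`, the same argument bounds
`liminf λ^p n(λ, T + T')` from below.
-/

section SingularValues

variable {E F : Type*} [NormedAddCommGroup E] [NormedSpace ℂ E]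
  [NormedAddCommGroup F] [NormedSpace ℂ F]

theorem sNum_le_norm_sub (T G : E →L[ℂ] F) {k : ℕ} (hG : (G : E →ₗ[ℂ] F).rank ≤ k) :
    sNum T k ≤ ‖T - G‖ :=
  csInf_le ⟨0, fun _ ⟨_, _, hc⟩ => (norm_nonneg _).trans hc⟩ ⟨G, hG, le_rfl⟩

theorem exists_norm_sub_lt_sNum_add (T : E →L[ℂ] F) (k : ℕ) {ε : ℝ} (hε : 0 < ε) :
    ∃ G : E →L[ℂ] F, (G : E →ₗ[ℂ] F).rank ≤ k ∧ ‖T - G‖ < sNum T k + ε := by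
  obtain ⟨c, ⟨G, hG, hc⟩, hlt⟩ :=
    exists_lt_of_csInf_lt (by exact ⟨‖T‖, 0, by simp⟩) (lt_add_of_pos_right (sNum T k) hε)
  exact ⟨G, hG, hc.trans_lt hlt⟩

theorem sNum_antitone (T : E →L[ℂ] F) : Antitone (sNum T) := fun j k hjk =>
  le_of_forall_pos_lt_add fun ε hε => by
    obtain ⟨G, hG, hlt⟩ := exists_norm_sub_lt_sNum_add T j hε
    exact (sNum_le_norm_sub T G (hG.trans (by exact_mod_cast hjk))).trans_lt hlt

theorem sNum_neg_le (T : E →L[ℂ] F) (k : ℕ) : sNum (-T) k ≤ sNum T k :=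
  le_of_forall_pos_lt_add fun ε hε => by
    obtain ⟨G, hG, hlt⟩ := exists_norm_sub_lt_sNum_add T k hε
    have hrank : ((-G : E →L[ℂ] F) : E →ₗ[ℂ] F).rank ≤ k := by
      rwa [ContinuousLinearMap.toLinearMap_neg, LinearMap.rank, LinearMap.range_neg]
    calc sNum (-T) k ≤ ‖-T - -G‖ := sNum_le_norm_sub (-T) (-G) hrank
      _ = ‖T - G‖ := by rw [neg_sub_neg, norm_sub_rev]
      _ < sNum T k + ε := hlt

theorem sNum_neg (T : E →L[ℂ] F) (k : ℕ) : sNum (-T) k = sNum T k :=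
  (sNum_neg_le T k).antisymm (by simpa using sNum_neg_le (-T) k)

theorem sNum_add_le (T T' : E →L[ℂ] F) (j k : ℕ) :
    sNum (T + T') (j + k) ≤ sNum T j + sNum T' k := by
  refine le_of_forall_pos_lt_add fun ε hε => ?_
  obtain ⟨G, hG, hlt⟩ := exists_norm_sub_lt_sNum_add T j (half_pos hε)
  obtain ⟨G', hG', hlt'⟩ := exists_norm_sub_lt_sNum_add T' k (half_pos hε)
  have hrank : ((G + G' : E →L[ℂ] F) : E →ₗ[ℂ] F).rank ≤ ↑(j + k) := by
    rw [ContinuousLinearMap.toLinearMap_add, Nat.cast_add]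
    exact (LinearMap.rank_add_le _ _).trans (add_le_add hG hG')
  calc sNum (T + T') (j + k) ≤ ‖T + T' - (G + G')‖ := sNum_le_norm_sub _ _ hrank
    _ = ‖(T - G) + (T' - G')‖ := by rw [add_sub_add_comm]
    _ ≤ ‖T - G‖ + ‖T' - G'‖ := norm_add_le _ _
    _ < sNum T j + sNum T' k + ε := by linarith

theorem nCountE_eq_encard (T : E →L[ℂ] F) (lam : ℝ) :
    nCountE T lam = {k : ℕ | lam < sNum T k}.encard := by
  rw [← ENNReal.tsum_set_one]
  rfl

theorem nCountE_le_natCast_iff (T : E →L[ℂ] F) (lam : ℝ) (k : ℕ) :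
    nCountE T lam ≤ k ↔ sNum T k ≤ lam := by
  rw [nCountE_eq_encard, ← ENat.toENNReal_coe, ENat.toENNReal_le]
  constructor
  · intro h
    by_contra! hlt
    have hsub : {j : ℕ | j < k + 1} ⊆ {j | lam < sNum T j} := fun j hj =>
      hlt.trans_le (sNum_antitone T (Nat.lt_succ_iff.mp hj))
    have := (Set.encard_mono hsub).trans h
    rw [Set.Nat.encard_range, Nat.cast_le] at this
    omega
  · intro h
    have hsub : {j : ℕ | lam < sNum T j} ⊆ {j | j < k} := fun j (hj : lam < sNum T j) => by
      change j < k
      by_contra! hkj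
      exact ((sNum_antitone T hkj).trans h).not_gt hj
    exact (Set.encard_mono hsub).trans_eq (Set.Nat.encard_range k)

theorem exists_nCountE_eq_natCast (T : E →L[ℂ] F) {lam : ℝ} (h : nCountE T lam ≠ ⊤) :
    ∃ k : ℕ, nCountE T lam = k := by
  rw [nCountE_eq_encard] at h ⊢
  obtain ⟨k, hk⟩ := ENat.ne_top_iff_exists.mp (ENat.toENNReal_ne_top.mp h)
  exact ⟨k, by simp [← hk]⟩

theorem nCountE_neg (T : E →L[ℂ] F) (lam : ℝ) : nCountE (-T) lam = nCountE T lam := by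
  simp only [nCountE_eq_encard, sNum_neg]

theorem nCountE_add_le (T T' : E →L[ℂ] F) (a b : ℝ) :
    nCountE (T + T') (a + b) ≤ nCountE T a + nCountE T' b := by
  rcases eq_or_ne (nCountE T a) ⊤ with ha | ha
  · simp [ha]
  rcases eq_or_ne (nCountE T' b) ⊤ with hb | hb
  · simp [hb]
  obtain ⟨j, hj⟩ := exists_nCountE_eq_natCast T ha
  obtain ⟨k, hk⟩ := exists_nCountE_eq_natCast T' hb
  rw [hj, hk, ← Nat.cast_add, nCountE_le_natCast_iff]
  exact (sNum_add_le T T' j k).trans (add_le_add ((nCountE_le_natCast_iff T a j).mp hj.le)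
    ((nCountE_le_natCast_iff T' b k).mp hk.le))

end SingularValues

section RegularVariation

theorem map_mul_left_nhdsGT_zero {c : ℝ} (hc : 0 < c) :
    map (c * ·) (𝓝[>] (0 : ℝ)) = 𝓝[>] 0 := by
  conv_lhs => rw [← comap_mulLeft_nhdsGT_zero hc]
  exact map_comap_of_surjective (mul_left_surjective₀ hc.ne') _

theorem ofReal_rpow_eq_mul {c lam : ℝ} (hc : 0 < c) (hlam : 0 < lam) (p : ℝ) :
    ENNReal.ofReal (lam ^ p) = ENNReal.ofReal (c ^ (-p)) * ENNReal.ofReal ((c * lam) ^ p) := by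
  rw [← ENNReal.ofReal_mul (by positivity), Real.mul_rpow hc.le hlam.le, ← mul_assoc,
    ← Real.rpow_add hc, neg_add_cancel, Real.rpow_zero, one_mul]

theorem tendsto_ofReal_rpow_nhdsLT_one (p : ℝ) :
    Tendsto (fun c : ℝ => ENNReal.ofReal (c ^ p)) (𝓝[<] 1) (𝓝 1) := by
  have h := (Real.continuousAt_rpow_const 1 p (Or.inl one_ne_zero)).tendsto
  rw [Real.one_rpow] at h
  simpa using ENNReal.tendsto_ofReal (h.mono_left nhdsWithin_le_nhds)

theorem le_of_forall_ofReal_rpow_mul_le {p : ℝ} {a b : ℝ≥0∞}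
    (h : ∀ c : ℝ, 0 < c → c < 1 → a ≤ ENNReal.ofReal (c ^ (-p)) * b) : a ≤ b := by
  have hlim := ENNReal.Tendsto.mul_const (b := b) (tendsto_ofReal_rpow_nhdsLT_one (-p))
    (Or.inl one_ne_zero)
  rw [one_mul] at hlim
  refine ge_of_tendsto hlim ?_
  filter_upwards [Ioo_mem_nhdsLT zero_lt_one] with c hc using h c hc.1 hc.2

variable {p : ℝ} {f g h : ℝ → ℝ≥0∞}

theorem tendsto_rpow_mul_comp_mul_left {c : ℝ} (hc : 0 < c)
    (hg : Tendsto (fun lam : ℝ => ENNReal.ofReal (lam ^ p) * g lam) (𝓝[>] 0) (𝓝 0)) :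
    Tendsto (fun lam : ℝ => ENNReal.ofReal (lam ^ p) * g (c * lam)) (𝓝[>] 0) (𝓝 0) := by
  have hcomp := ENNReal.Tendsto.const_mul (a := ENNReal.ofReal (c ^ (-p)))
    (hg.comp (map_mul_left_nhdsGT_zero hc).le) (Or.inr ENNReal.ofReal_ne_top)
  rw [mul_zero] at hcomp
  refine hcomp.congr' ?_
  filter_upwards [self_mem_nhdsWithin] with lam hlam
  simp only [Function.comp_apply, ofReal_rpow_eq_mul hc hlam p, mul_assoc]

theorem rpow_mul_le_of_add_le (hsub : ∀ a b, 0 < a → 0 < b → h (a + b) ≤ f a + g b)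
    {c : ℝ} (hc₀ : 0 < c) (hc₁ : c < 1) :
    ∀ᶠ lam in 𝓝[>] (0 : ℝ), ENNReal.ofReal (lam ^ p) * h lam ≤
      ENNReal.ofReal (c ^ (-p)) * (ENNReal.ofReal ((c * lam) ^ p) * f (c * lam)) +
        ENNReal.ofReal (lam ^ p) * g ((1 - c) * lam) := by
  filter_upwards [self_mem_nhdsWithin] with lam (hlam : 0 < lam)
  have hsplit := hsub (c * lam) ((1 - c) * lam) (by positivity) (mul_pos (by linarith) hlam)
  rw [← add_mul, add_sub_cancel, one_mul] at hsplit
  calc ENNReal.ofReal (lam ^ p) * h lam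
      ≤ ENNReal.ofReal (lam ^ p) * (f (c * lam) + g ((1 - c) * lam)) := by gcongr
    _ = _ := by rw [mul_add, ofReal_rpow_eq_mul hc₀ hlam p, mul_assoc]

theorem limsup_rpow_mul_le_of_add_le (hsub : ∀ a b, 0 < a → 0 < b → h (a + b) ≤ f a + g b)
    (hg : Tendsto (fun lam : ℝ => ENNReal.ofReal (lam ^ p) * g lam) (𝓝[>] 0) (𝓝 0)) :
    limsup (fun lam : ℝ => ENNReal.ofReal (lam ^ p) * h lam) (𝓝[>] 0) ≤
      limsup (fun lam : ℝ => ENNReal.ofReal (lam ^ p) * f lam) (𝓝[>] 0) := by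
  refine le_of_forall_ofReal_rpow_mul_le (p := p) fun c hc₀ hc₁ => ?_
  calc limsup (fun lam : ℝ => ENNReal.ofReal (lam ^ p) * h lam) (𝓝[>] 0)
      ≤ limsup ((fun lam : ℝ => ENNReal.ofReal (c ^ (-p)) *
            (ENNReal.ofReal ((c * lam) ^ p) * f (c * lam))) +
          fun lam : ℝ => ENNReal.ofReal (lam ^ p) * g ((1 - c) * lam)) (𝓝[>] 0) :=
        limsup_le_limsup (rpow_mul_le_of_add_le hsub hc₀ hc₁)
    _ = ENNReal.ofReal (c ^ (-p)) *
          limsup ((fun lam : ℝ => ENNReal.ofReal (lam ^ p) * f lam) ∘ (c * ·)) (𝓝[>] 0) := by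
        rw [ENNReal.limsup_add_of_right_tendsto_zero
          (tendsto_rpow_mul_comp_mul_left (by linarith) hg),
          ENNReal.limsup_const_mul_of_ne_top ENNReal.ofReal_ne_top]
        rfl
    _ = _ := by rw [limsup_comp, map_mul_left_nhdsGT_zero hc₀]

theorem liminf_rpow_mul_le_of_add_le (hsub : ∀ a b, 0 < a → 0 < b → h (a + b) ≤ f a + g b)
    (hg : Tendsto (fun lam : ℝ => ENNReal.ofReal (lam ^ p) * g lam) (𝓝[>] 0) (𝓝 0)) :
    liminf (fun lam : ℝ => ENNReal.ofReal (lam ^ p) * h lam) (𝓝[>] 0) ≤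
      liminf (fun lam : ℝ => ENNReal.ofReal (lam ^ p) * f lam) (𝓝[>] 0) := by
  refine le_of_forall_ofReal_rpow_mul_le (p := p) fun c hc₀ hc₁ => ?_
  calc liminf (fun lam : ℝ => ENNReal.ofReal (lam ^ p) * h lam) (𝓝[>] 0)
      ≤ liminf ((fun lam : ℝ => ENNReal.ofReal (c ^ (-p)) *
            (ENNReal.ofReal ((c * lam) ^ p) * f (c * lam))) +
          fun lam : ℝ => ENNReal.ofReal (lam ^ p) * g ((1 - c) * lam)) (𝓝[>] 0) :=
        liminf_le_liminf (rpow_mul_le_of_add_le hsub hc₀ hc₁)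
    _ = ENNReal.ofReal (c ^ (-p)) *
          liminf ((fun lam : ℝ => ENNReal.ofReal (lam ^ p) * f lam) ∘ (c * ·)) (𝓝[>] 0) := by
        rw [ENNReal.liminf_add_of_right_tendsto_zero
          (tendsto_rpow_mul_comp_mul_left (by linarith) hg),
          ENNReal.liminf_const_mul_of_ne_top ENNReal.ofReal_ne_top]
        rfl
    _ = _ := by rw [liminf_comp, map_mul_left_nhdsGT_zero hc₀]

end RegularVariation

theorem asymptotic_perturbation_general {H : Type*} [NormedAddCommGroup H]
    [InnerProductSpace ℂ H] (T T' : H →L[ℂ] H)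
    (C p : ℝ)
    (hbound : ∀ lam : ℝ, 0 < lam → nCountE T lam ≤ ENNReal.ofReal (C * lam ^ (-p)))
    (hsmall : Tendsto (fun lam : ℝ => ENNReal.ofReal (lam ^ p) * nCountE T' lam)
      (𝓝[>] 0) (𝓝 0)) :
    (limsup (fun lam : ℝ => ENNReal.ofReal (lam ^ p) * nCountE (T + T') lam) (𝓝[>] 0)
        ≤ ENNReal.ofReal C) ∧
    ((Tendsto (fun lam : ℝ => ENNReal.ofReal (lam ^ p) * nCountE T lam) (𝓝[>] 0)
        (𝓝 (ENNReal.ofReal C))) →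
      Tendsto (fun lam : ℝ => ENNReal.ofReal (lam ^ p) * nCountE (T + T') lam) (𝓝[>] 0)
        (𝓝 (ENNReal.ofReal C))) := by
  have hupper : limsup (fun lam : ℝ => ENNReal.ofReal (lam ^ p) * nCountE T lam) (𝓝[>] 0)
      ≤ ENNReal.ofReal C := by
    refine limsup_le_of_le (by isBoundedDefault) ?_
    filter_upwards [self_mem_nhdsWithin] with lam (hlam : 0 < lam)
    calc ENNReal.ofReal (lam ^ p) * nCountE T lam
        ≤ ENNReal.ofReal (lam ^ p) * ENNReal.ofReal (C * lam ^ (-p)) :=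
          mul_le_mul_right (hbound lam hlam) _
      _ = ENNReal.ofReal C := by
        rw [← ENNReal.ofReal_mul (by positivity), Real.rpow_neg hlam.le,
          mul_left_comm, mul_inv_cancel₀ (by positivity), mul_one]
  have hsum : ∀ a b, 0 < a → 0 < b → nCountE (T + T') (a + b) ≤ nCountE T a + nCountE T' b :=
    fun a b _ _ => nCountE_add_le T T' a b
  have hdiff : ∀ a b, 0 < a → 0 < b → nCountE T (a + b) ≤ nCountE (T + T') a + nCountE T' b :=
    fun a b _ _ => by simpa [nCountE_neg] using nCountE_add_le (T + T') (-T') a b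
  have hlimsup := (limsup_rpow_mul_le_of_add_le hsum hsmall).trans hupper
  refine ⟨hlimsup, fun hlim => tendsto_of_le_liminf_of_limsup_le ?_ hlimsup⟩
  exact hlim.liminf_eq ▸ liminf_rpow_mul_le_of_add_le hdiff hsmall

/-- Asymptotic perturbation lemma: if `n(λ, T) ≤ C λ^{-p}` and `n(λ, T') = o(λ^{-p})`
as `λ → 0`, then `limsup_{λ→0} λ^p n(λ, T+T') ≤ C`; if moreover `n(λ, T) ~ C λ^{-p}`,
then `n(λ, T+T') ~ C λ^{-p}`. -/
theorem asymptotic_perturbation {H : Type*} [NormedAddCommGroup H]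
    [InnerProductSpace ℂ H] [CompleteSpace H] (T T' : H →L[ℂ] H)
    (hT : IsCompactOperator T) (hT' : IsCompactOperator T')
    (C p : ℝ) (hC : 0 < C) (hp : 0 < p)
    (hbound : ∀ lam : ℝ, 0 < lam → nCountE T lam ≤ ENNReal.ofReal (C * lam ^ (-p)))
    (hsmall : Tendsto (fun lam : ℝ => ENNReal.ofReal (lam ^ p) * nCountE T' lam)
      (𝓝[>] 0) (𝓝 0)) :
    (limsup (fun lam : ℝ => ENNReal.ofReal (lam ^ p) * nCountE (T + T') lam) (𝓝[>] 0)
        ≤ ENNReal.ofReal C) ∧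
    ((Tendsto (fun lam : ℝ => ENNReal.ofReal (lam ^ p) * nCountE T lam) (𝓝[>] 0)
        (𝓝 (ENNReal.ofReal C))) →
      Tendsto (fun lam : ℝ => ENNReal.ofReal (lam ^ p) * nCountE (T + T') lam) (𝓝[>] 0)
        (𝓝 (ENNReal.ofReal C))) :=
  asymptotic_perturbation_general T T' C p hbound hsmall
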